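/- arXiv:1805.05160 — 7 statements merged into one kernel-verified Lean document; each statement's English description precedes it below -/
import Mathlib

section
/- Let R be an infinite integral domain whose additive group R⁺ is a finitely generated abelian group, and let n ≥ 2 satisfy n ≤ |R*|, where R* is the group of units of R. Then UT_n(R) does not possess the R_∞-property: there exist n pairwise distinct units d₁,…,d_n ∈ R*, and for D = diag(d₁,…,d_n) the diagonal automorphism ψ_D : X ↦ D X D⁻¹ of UT_n(R) has finite Reidemeister number R(ψ_D) < ∞. -/
open Matrix

/-- `x` and `y` are twisted conjugate with respect to the automorphism `φ`,
i.e. `x = z * y * (φ z)⁻¹` for some `z`. -/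
def TwistedConj {G : Type*} [Group G] (φ : G ≃* G) (x y : G) : Prop :=
  ∃ z : G, x = z * y * (φ z)⁻¹

/-- The Reidemeister number of an automorphism: the number of twisted conjugacy classes,
as an element of `ℕ∞ = ℕ ∪ {∞}` (`⊤` meaning infinitely many classes). -/
noncomputable def reidemeisterNumber {G : Type*} [Group G] (φ : G ≃* G) : ℕ∞ :=
  Cardinal.toENat (Cardinal.mk (Quot (TwistedConj φ)))

/-- A matrix is (upper) unitriangular if it has `1` on the diagonal and `0` below it. -/
def Matrix.IsUnitriangular {n : ℕ} {R : Type*} [CommRing R]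
    (M : Matrix (Fin n) (Fin n) R) : Prop :=
  (∀ i, M i i = 1) ∧ ∀ ⦃i j : Fin n⦄, j < i → M i j = 0

namespace Matrix.IsUnitriangular

variable {n : ℕ} {R : Type*} [CommRing R] {M N : Matrix (Fin n) (Fin n) R}

theorem blockTriangular (h : M.IsUnitriangular) : M.BlockTriangular (id : Fin n → Fin n) :=
  fun _ _ hij => h.2 hij

theorem one : (1 : Matrix (Fin n) (Fin n) R).IsUnitriangular :=
  ⟨fun i => by simp, fun i j hij => by simp [Matrix.one_apply, (ne_of_lt hij).symm]⟩

theorem diag_mul (hM : M.IsUnitriangular) (hN : N.BlockTriangular (id : Fin n → Fin n))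
    (i : Fin n) : (M * N) i i = N i i := by
  rw [Matrix.mul_apply, Finset.sum_eq_single i]
  · rw [hM.1 i, one_mul]
  · intro k _ hk
    rcases lt_or_gt_of_ne hk with hlt | hgt
    · rw [hM.2 hlt, zero_mul]
    · rw [hN (show (id i : Fin n) < id k from hgt), mul_zero]
  · intro h; exact absurd (Finset.mem_univ i) h

theorem mul (hM : M.IsUnitriangular) (hN : N.IsUnitriangular) : (M * N).IsUnitriangular := by
  constructor
  · intro i
    rw [hM.diag_mul hN.blockTriangular i, hN.1 i]
  · intro i j hij
    rw [Matrix.mul_apply]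
    refine Finset.sum_eq_zero fun k _ => ?_
    rcases lt_or_ge k i with hk | hk
    · rw [hM.2 hk, zero_mul]
    · rw [hN.2 (lt_of_lt_of_le hij hk), mul_zero]

end Matrix.IsUnitriangular

/-- The group `UT n R` of upper unitriangular `n × n` matrices over `R`, realized as a
subgroup of the group of units of the matrix ring. -/
def UT (n : ℕ) (R : Type*) [CommRing R] : Subgroup (Matrix (Fin n) (Fin n) R)ˣ where
  carrier := {u | Matrix.IsUnitriangular (u : Matrix (Fin n) (Fin n) R)}
  one_mem' := by simpa using Matrix.IsUnitriangular.one
  mul_mem' := by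
    intro a b ha hb
    simpa using ha.mul hb
  inv_mem' := by
    intro u hu
    have hdet : IsUnit ((u : Matrix (Fin n) (Fin n) R)).det :=
      (Matrix.isUnit_iff_isUnit_det _).mp u.isUnit
    haveI : Invertible (u : Matrix (Fin n) (Fin n) R) := u.invertible
    have htri : ((u : Matrix (Fin n) (Fin n) R)⁻¹).BlockTriangular (id : Fin n → Fin n) :=
      Matrix.blockTriangular_inv_of_blockTriangular hu.blockTriangular
    have hval : ((u⁻¹ : (Matrix (Fin n) (Fin n) R)ˣ) : Matrix (Fin n) (Fin n) R)
        = (u : Matrix (Fin n) (Fin n) R)⁻¹ := by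
      simp [Matrix.coe_units_inv]
    constructor
    · intro i
      have h1 : ((u : Matrix (Fin n) (Fin n) R) * (u : Matrix (Fin n) (Fin n) R)⁻¹) i i = 1 := by
        rw [Matrix.mul_nonsing_inv _ hdet]; simp
      rw [hval]
      rw [hu.diag_mul htri i] at h1
      exact h1
    · intro i j hij
      rw [hval]
      exact htri hij

/-- The underlying matrix of an element of `UT n R`. -/
def UTmat {n : ℕ} {R : Type*} [CommRing R] (X : UT n R) : Matrix (Fin n) (Fin n) R :=
  ((X : (Matrix (Fin n) (Fin n) R)ˣ) : Matrix (Fin n) (Fin n) R)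

/-!
Let `D = diag(d₁, …, dₙ)` with pairwise distinct units, and call `j - i` the level of the entry
`(i, j)`. Twisted conjugation by `1 + N`, where `N` vanishes below level `m ≥ 1`, leaves the
entries of `X` below level `m` unchanged and shifts the entry `(i, j)` at level `m` by
`(1 - dᵢ dⱼ⁻¹) N i j`. Since `dᵢ ≠ dⱼ`, the factor `1 - dᵢ dⱼ⁻¹` is nonzero, and a nonzero
principal ideal of a domain with finitely generated additive group has finite index (such a domain
is finite or free of finite rank over `ℤ`). Normalizing level by level, every `X` is
`ψ_D`-conjugate to a matrix whose entries above the diagonal lie in fixed finite sets of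
representatives, so `R(ψ_D) < ∞`.
-/

section TwistedConj

variable {G : Type*} [Group G] {φ : G ≃* G}

theorem TwistedConj.refl (x : G) : TwistedConj φ x x :=
  ⟨1, by simp⟩

theorem TwistedConj.trans {x y z : G} (hxy : TwistedConj φ x y) (hyz : TwistedConj φ y z) :
    TwistedConj φ x z := by
  obtain ⟨a, rfl⟩ := hxy
  obtain ⟨b, rfl⟩ := hyz
  exact ⟨a * b, by simp [mul_assoc]⟩

theorem reidemeisterNumber_ne_top_of_finite (φ : G ≃* G) {S : Set G} (hS : S.Finite)
    (hrep : ∀ g : G, ∃ s ∈ S, TwistedConj φ s g) : reidemeisterNumber φ ≠ ⊤ := by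
  have hsurj : Function.Surjective fun s : S => Quot.mk (TwistedConj φ) (s : G) := by
    rintro ⟨g⟩
    obtain ⟨s, hs, hsg⟩ := hrep g
    exact ⟨⟨s, hs⟩, Quot.sound hsg⟩
  have := hS.to_subtype
  have : Finite (Quot (TwistedConj φ)) := Finite.of_surjective _ hsurj
  rw [reidemeisterNumber, ne_eq, Cardinal.toENat_eq_top, not_le]
  exact Cardinal.lt_aleph0_of_finite _

end TwistedConj

theorem Ideal.finite_quotient_span_singleton {R : Type*} [CommRing R] [IsDomain R]
    [AddGroup.FG R] {r : R} (hr : r ≠ 0) : Finite (R ⧸ Ideal.span {r}) := by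
  obtain ⟨p, hp⟩ := CharP.exists R
  rcases CharP.char_is_prime_or_zero R p with hprime | rfl
  · have htors : IsAddTorsion R := fun x =>
      isOfFinAddOrder_iff_nsmul_eq_zero.mpr
        ⟨p, hprime.pos, by simp [nsmul_eq_mul]⟩
    have := AddCommGroup.finite_of_fg_isAddTorsion R htors
    exact Finite.of_surjective _ Ideal.Quotient.mk_surjective
  · have := CharP.charP_to_charZero R
    have : Module.Finite ℤ R := Module.Finite.iff_addGroup_fg.mpr ‹_›
    exact Ideal.finiteQuotientOfFreeOfNeBot _ (Ideal.span_singleton_eq_bot.not.mpr hr)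

theorem exists_add_mul_mem_range_out {R : Type*} [CommRing R] (r x : R) :
    ∃ c, x + r * c ∈ Set.range (Quotient.out : R ⧸ Ideal.span {r} → R) := by
  obtain ⟨c, hc⟩ := Ideal.mem_span_singleton'.mp <|
    Ideal.Quotient.eq.mp (Quotient.out_eq (Ideal.Quotient.mk (Ideal.span {r}) x))
  exact ⟨c, _, by linear_combination -hc⟩

theorem Units.one_sub_mul_inv_ne_zero {R : Type*} [Ring R] {u v : Rˣ} (h : u ≠ v) :
    (1 : R) - u * ↑v⁻¹ ≠ 0 :=
  sub_ne_zero.mpr fun h' => h (Units.ext (Units.mul_inv_eq_one.mp h'.symm))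

namespace Matrix

variable {n : ℕ} {R : Type*} [CommRing R]

def VanishesBelowLevel (m : ℕ) (N : Matrix (Fin n) (Fin n) R) : Prop :=
  ∀ i j : Fin n, (j : ℕ) < i + m → N i j = 0

namespace IsUnitriangular

variable {A B : Matrix (Fin n) (Fin n) R}

theorem isUnit (hA : A.IsUnitriangular) : IsUnit A := by
  rw [isUnit_iff_isUnit_det, det_of_isUpperTriangular hA.blockTriangular]
  simp [hA.1]

theorem ext (hA : A.IsUnitriangular) (hB : B.IsUnitriangular)
    (h : ∀ i j, i < j → A i j = B i j) : A = B := by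
  ext i j
  rcases lt_trichotomy i j with hij | rfl | hji
  · exact h i j hij
  · rw [hA.1, hB.1]
  · rw [hA.2 hji, hB.2 hji]

theorem of_vanishesBelowLevel_one {N : Matrix (Fin n) (Fin n) R} (hN : N.VanishesBelowLevel 1) :
    (1 + N).IsUnitriangular :=
  ⟨fun i => by simp [hN i i (by omega)],
    fun i j hji => by simp [one_apply_ne hji.ne', hN i j (by rw [Fin.lt_def] at hji; omega)]⟩

variable {m : ℕ} {N : Matrix (Fin n) (Fin n) R} {i j : Fin n}

theorem mul_apply_of_vanishesBelowLevel (hA : A.IsUnitriangular) (hN : N.VanishesBelowLevel m)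
    (hij : (j : ℕ) ≤ i + m) : (A * N) i j = N i j := by
  rw [mul_apply, Finset.sum_eq_single i]
  · rw [hA.1, one_mul]
  · intro k _ hki
    rcases hki.lt_or_gt with hki | hik
    · rw [hA.2 hki, zero_mul]
    · rw [hN k j (by rw [Fin.lt_def] at hik; omega), mul_zero]
  · simp

theorem vanishesBelowLevel_mul_apply (hA : A.IsUnitriangular) (hN : N.VanishesBelowLevel m)
    (hij : (j : ℕ) ≤ i + m) : (N * A) i j = N i j := by
  rw [mul_apply, Finset.sum_eq_single j]
  · rw [hA.1, mul_one]
  · intro k _ hkj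
    rcases hkj.lt_or_gt with hkj | hjk
    · rw [hN i k (by rw [Fin.lt_def] at hkj; omega), zero_mul]
    · rw [hA.2 hjk, mul_zero]
  · simp

end IsUnitriangular

theorem diagonal_mul_mul_diagonal_apply (a b : Fin n → R) (M : Matrix (Fin n) (Fin n) R)
    (i j : Fin n) : (diagonal a * M * diagonal b) i j = a i * M i j * b j := by
  rw [mul_diagonal, diagonal_mul]

theorem isUnitriangular_diagonal_conj_iff (d : Fin n → Rˣ) (M : Matrix (Fin n) (Fin n) R) :
    (diagonal (fun i => (d i : R)) * M * diagonal (fun i => (↑(d i)⁻¹ : R))).IsUnitriangular ↔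
      M.IsUnitriangular := by
  have hentry : ∀ i j, (diagonal (fun i => (d i : R)) * M * diagonal (fun i => (↑(d i)⁻¹ : R))) i j
      = d i * (↑(d j)⁻¹ * M i j) := fun i j => by rw [diagonal_mul_mul_diagonal_apply]; ring
  simp only [IsUnitriangular, hentry, Units.mul_inv_cancel_left, Units.mul_right_eq_zero]

end Matrix

section UT

variable {n : ℕ} {R : Type*} [CommRing R]

theorem UTmat_injective : Function.Injective (UTmat : UT n R → Matrix (Fin n) (Fin n) R) :=
  fun _ _ h => Subtype.ext (Units.ext h)

theorem UTmat_isUnitriangular (X : UT n R) : (UTmat X).IsUnitriangular := X.2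

theorem UTmat_mul (X Y : UT n R) : UTmat (X * Y) = UTmat X * UTmat Y := rfl

noncomputable def UT.mk (M : Matrix (Fin n) (Fin n) R) (h : M.IsUnitriangular) : UT n R :=
  ⟨h.isUnit.unit, show (h.isUnit.unit : Matrix (Fin n) (Fin n) R).IsUnitriangular by
    rwa [IsUnit.unit_spec]⟩

theorem UTmat_mk (M : Matrix (Fin n) (Fin n) R) (h : M.IsUnitriangular) :
    UTmat (UT.mk M h) = M := rfl

theorem UT.finite_setOf_forall_apply_mem (T : Fin n → Fin n → Set R)
    (hT : ∀ i j, i < j → (T i j).Finite) :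
    {X : UT n R | ∀ i j, i < j → UTmat X i j ∈ T i j}.Finite := by
  let entries (X : UT n R) (p : {p : Fin n × Fin n // p.1 < p.2}) : R := UTmat X p.1.1 p.1.2
  have hinj : Function.Injective entries := fun X Y h =>
    UTmat_injective <| X.2.ext Y.2 fun i j hij => congrFun h ⟨(i, j), hij⟩
  refine Set.Finite.of_finite_image ?_ hinj.injOn
  refine (Set.Finite.pi (t := fun p => T p.1.1 p.1.2) fun p => hT _ _ p.2).subset ?_
  rintro _ ⟨X, hX, rfl⟩ p -
  exact hX _ _ p.2

def diagonalUnit (d : Fin n → Rˣ) : (Matrix (Fin n) (Fin n) R)ˣ :=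
  Units.map (diagonalRingHom (Fin n) R) (MulEquiv.piUnits.symm d)

theorem diagonalUnit_mem_normalizer (d : Fin n → Rˣ) :
    diagonalUnit d ∈ Subgroup.normalizer (UT n R : Set (Matrix (Fin n) (Fin n) R)ˣ) :=
  Subgroup.mem_normalizer_iff.mpr fun X => (isUnitriangular_diagonal_conj_iff d X).symm

def diagAut (d : Fin n → Rˣ) : MulAut (UT n R) :=
  (UT n R).normalizerMonoidHom ⟨diagonalUnit d, diagonalUnit_mem_normalizer d⟩

theorem UTmat_diagAut (d : Fin n → Rˣ) (X : UT n R) :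
    UTmat (diagAut d X) =
      diagonal (fun i => (d i : R)) * UTmat X * diagonal (fun i => (↑(d i)⁻¹ : R)) := rfl

theorem exists_twistedConj_apply_eq (d : Fin n → Rˣ) (Y : UT n R) {m : ℕ}
    {N : Matrix (Fin n) (Fin n) R} (hN : N.VanishesBelowLevel (m + 1)) :
    ∃ Y' : UT n R, TwistedConj (diagAut d) Y' Y ∧ ∀ i j : Fin n, (j : ℕ) ≤ i + (m + 1) →
      UTmat Y' i j = UTmat Y i j + (1 - (d i : R) * ↑(d j)⁻¹) * N i j := by
  let z := UT.mk (1 + N) (IsUnitriangular.of_vanishesBelowLevel_one fun i j h => hN i j (by omega))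
  refine ⟨z * Y * (diagAut d z)⁻¹, ⟨z, rfl⟩, fun i j hij => ?_⟩
  let N' := diagonal (fun i => (d i : R)) * N * diagonal (fun i => (↑(d i)⁻¹ : R))
  have hN' : N'.VanishesBelowLevel (m + 1) := fun i j h => by
    simp [N', hN i j h]
  have hDD : diagonal (fun i => (d i : R)) * diagonal (fun i => (↑(d i)⁻¹ : R)) = 1 :=
    Units.mul_inv (diagonalUnit d)
  have hψz : UTmat (diagAut d z) = 1 + N' := by
    rw [UTmat_diagAut, UTmat_mk, mul_add, add_mul, mul_one, hDD]
  have hmat : UTmat (z * Y * (diagAut d z)⁻¹) * (1 + N') = (1 + N) * UTmat Y := by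
    rw [← hψz, ← UTmat_mk (1 + N), ← UTmat_mul, ← UTmat_mul, inv_mul_cancel_right]
  have hentry := congrFun (congrFun hmat i) j
  simp only [mul_add, add_mul, mul_one, one_mul, Matrix.add_apply] at hentry
  rw [(UTmat_isUnitriangular _).mul_apply_of_vanishesBelowLevel hN' hij,
    (UTmat_isUnitriangular Y).vanishesBelowLevel_mul_apply hN hij,
    show N' i j = d i * N i j * ↑(d j)⁻¹ from diagonal_mul_mul_diagonal_apply ..] at hentry
  linear_combination hentry

theorem exists_twistedConj_forall_apply_mem (d : Fin n → Rˣ) (T : Fin n → Fin n → Set R)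
    (hT : ∀ i j x, ∃ c, x + (1 - (d i : R) * ↑(d j)⁻¹) * c ∈ T i j) (s : ℕ) (X : UT n R) :
    ∃ Y : UT n R, TwistedConj (diagAut d) Y X ∧
      ∀ i j : Fin n, i < j → (j : ℕ) ≤ i + s → UTmat Y i j ∈ T i j := by
  induction s with
  | zero => exact ⟨X, .refl X, fun i j hij hji => absurd hij (by rw [Fin.lt_def]; omega)⟩
  | succ s ih =>
    obtain ⟨Y, hYX, hY⟩ := ih
    choose c hc using hT
    let N : Matrix (Fin n) (Fin n) R :=
      of fun i j => if (j : ℕ) = i + (s + 1) then c i j (UTmat Y i j) else 0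
    have hN : N.VanishesBelowLevel (s + 1) := fun i j h => by simp [N, h.ne]
    obtain ⟨Y', hY'Y, hY'⟩ := exists_twistedConj_apply_eq d Y hN
    refine ⟨Y', hY'Y.trans hYX, fun i j hij hjs => ?_⟩
    rw [hY' i j hjs]
    rcases hjs.lt_or_eq with hlt | heq
    · rw [hN i j hlt, mul_zero, add_zero]
      exact hY i j hij (by omega)
    · simpa [N, heq] using hc i j (UTmat Y i j)

end UT

theorem UT_not_R_infinity_of_card_units_ge_general
    (R : Type) [CommRing R] [IsDomain R] [AddGroup.FG R]
    (n : ℕ) (hn : (n : Cardinal) ≤ Cardinal.mk Rˣ) :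
    ∃ d : Fin n → Rˣ, Function.Injective d ∧
      ∃ ψ : MulAut (UT n R),
        (∀ X : UT n R, UTmat (ψ X) =
          Matrix.diagonal (fun i => (d i : R)) * UTmat X *
            Matrix.diagonal (fun i => (((d i)⁻¹ : Rˣ) : R))) ∧
        reidemeisterNumber (ψ : (UT n R) ≃* (UT n R)) ≠ ⊤ := by
  obtain ⟨d⟩ := (Cardinal.le_def (Fin n) Rˣ).mp (by rwa [Cardinal.mk_fin])
  refine ⟨d, d.injective, diagAut d, UTmat_diagAut d, ?_⟩
  let T (i j : Fin n) : Set R :=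
    Set.range (Quotient.out : R ⧸ Ideal.span {1 - (d i : R) * ↑(d j)⁻¹} → R)
  have hT (i j : Fin n) (hij : i < j) : (T i j).Finite :=
    have := Ideal.finite_quotient_span_singleton
      (Units.one_sub_mul_inv_ne_zero (d.injective.ne hij.ne))
    Set.finite_range _
  refine reidemeisterNumber_ne_top_of_finite _ (UT.finite_setOf_forall_apply_mem T hT) fun X => ?_
  obtain ⟨Y, hYX, hY⟩ :=
    exists_twistedConj_forall_apply_mem d T (fun _ _ => exists_add_mul_mem_range_out _) n X
  exact ⟨Y, fun i j hij => hY i j hij (by omega), hYX⟩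

/-- If `R` is an infinite integral domain with finitely generated additive group and
`2 ≤ n ≤ |Rˣ|`, then `UT n R` does not possess the `R∞`-property: there are `n` pairwise
distinct units `d₁, …, dₙ` such that the corresponding diagonal automorphism
`X ↦ D X D⁻¹` has finite Reidemeister number. -/
theorem UT_not_R_infinity_of_card_units_ge
    (R : Type) [CommRing R] [IsDomain R] [Infinite R] [AddGroup.FG R]
    (n : ℕ) (hn2 : 2 ≤ n) (hn : (n : Cardinal) ≤ Cardinal.mk Rˣ) :
    ∃ d : Fin n → Rˣ, Function.Injective d ∧
      ∃ ψ : MulAut (UT n R),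
        (∀ X : UT n R, UTmat (ψ X) =
          Matrix.diagonal (fun i => (d i : R)) * UTmat X *
            Matrix.diagonal (fun i => (((d i)⁻¹ : Rˣ) : R))) ∧
        reidemeisterNumber (ψ : (UT n R) ≃* (UT n R)) ≠ ⊤ :=
  UT_not_R_infinity_of_card_units_ge_general R n hn
end

section
/- Let R be a field of characteristic zero and n ≥ 2. Then there exists an invertible diagonal matrix D = diag(d₁,…,d_n) with entries in R* such that the diagonal automorphism ψ_D : X ↦ D X D⁻¹ of UT_n(R) has Reidemeister number R(ψ_D) = 1, i.e. all elements of UT_n(R) are pairwise ψ_D-conjugate. -/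
open Matrix

/-! `R(ψ) = 1` as soon as every `X` has the form `Z * ψ(Z)⁻¹`. Conjugation by
`D = diag(d₁, …, dₙ)` multiplies the entry `(i, j)` by `dᵢ / dⱼ`, so `X * ψ(Z) = Z` is a triangular
system in the entries of `Z` whose pivots `1 - dᵢ / dⱼ` (`i < j`) are nonzero when the `dᵢ` are
pairwise distinct, e.g. `dᵢ = i + 1` in characteristic zero; back substitution solves it. -/

theorem reidemeisterNumber_eq_one_of_forall_twistedConj_one {G : Type*} [Group G]
    (φ : G ≃* G) (h : ∀ x, TwistedConj φ x 1) : reidemeisterNumber φ = 1 := by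
  have : Subsingleton (Quot (TwistedConj φ)) :=
    ⟨Quot.ind fun x => Quot.ind fun y => (Quot.sound (h x)).trans (Quot.sound (h y)).symm⟩
  have : Nonempty (Quot (TwistedConj φ)) := ⟨Quot.mk _ 1⟩
  simp [reidemeisterNumber, Cardinal.mk_eq_one]

theorem Matrix.mul_apply_eq_sum_Icc {m : Type*} [Fintype m] [LinearOrder m] [LocallyFiniteOrder m]
    {R : Type*} [NonUnitalNonAssocSemiring R] {M N : Matrix m m R}
    (hM : M.BlockTriangular id) (hN : N.BlockTriangular id) (i j : m) :
    (M * N) i j = ∑ k ∈ Finset.Icc i j, M i k * N k j := by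
  rw [mul_apply]
  refine (Finset.sum_subset (Finset.subset_univ _) fun k _ hk => ?_).symm
  rcases not_and_or.mp (Finset.mem_Icc.not.mp hk) with hik | hkj
  · rw [hM (not_le.mp hik), zero_mul]
  · rw [hN (not_le.mp hkj), mul_zero]

namespace Matrix

variable {m : Type*} [Fintype m] [DecidableEq m] {R : Type*} [CommRing R]

theorem diagonal_mul_mul_diagonal_eq_hadamard (d e : m → R) (M : Matrix m m R) :
    diagonal d * M * diagonal e = of (fun i j => d i * e j) ⊙ M := by
  ext i j
  simp only [mul_diagonal, diagonal_mul, hadamard_apply, of_apply]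
  ring

variable (R) in
noncomputable def diagonalUnits : (m → Rˣ) →* (Matrix m m R)ˣ :=
  (Units.map (diagonalRingHom m R : (m → R) →* Matrix m m R)).comp
    MulEquiv.piUnits.symm.toMonoidHom

theorem coe_diagonalUnits_inv (d : m → Rˣ) :
    (((diagonalUnits R d)⁻¹ : (Matrix m m R)ˣ) : Matrix m m R) =
      diagonal fun i => (((d i)⁻¹ : Rˣ) : R) :=
  rfl

end Matrix

namespace Matrix.IsUnitriangular

variable {n : ℕ} {R : Type*} [CommRing R] {M : Matrix (Fin n) (Fin n) R}

theorem det_eq_one (h : M.IsUnitriangular) : M.det = 1 := by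
  rw [det_of_isUpperTriangular h.blockTriangular]
  simp [h.1]

theorem diagonal_mul_mul_diagonal {d e : Fin n → R} (hde : ∀ i, d i * e i = 1)
    (h : M.IsUnitriangular) : (diagonal d * M * diagonal e).IsUnitriangular :=
  ⟨fun i => by simp [h.1 i, hde i], fun i j hij => by simp [h.2 hij]⟩

end Matrix.IsUnitriangular

namespace UT

variable {n : ℕ} {R : Type*} [CommRing R]

theorem UTmat_mul (X Y : UT n R) : UTmat (X * Y) = UTmat X * UTmat Y := rfl

theorem UTmat_injective : Function.Injective (UTmat : UT n R → _) :=
  fun _ _ h => Subtype.ext (Units.ext h)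

theorem exists_UTmat_eq {M : Matrix (Fin n) (Fin n) R} (h : M.IsUnitriangular) :
    ∃ X : UT n R, UTmat X = M :=
  ⟨⟨(M.isUnit_iff_isUnit_det.mpr (h.det_eq_one ▸ isUnit_one)).unit, h⟩, rfl⟩

theorem diagonalUnits_conj_mem (d : Fin n → Rˣ) {X : (Matrix (Fin n) (Fin n) R)ˣ}
    (hX : X ∈ UT n R) : diagonalUnits R d * X * (diagonalUnits R d)⁻¹ ∈ UT n R := by
  change (_ * _ * _ : Matrix _ _ R).IsUnitriangular
  rw [coe_diagonalUnits_inv]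
  exact hX.diagonal_mul_mul_diagonal fun i => by simp

theorem diagonalUnits_mem_normalizer (d : Fin n → Rˣ) :
    diagonalUnits R d ∈ Subgroup.normalizer (UT n R : Set (Matrix (Fin n) (Fin n) R)ˣ) := by
  refine Subgroup.mem_normalizer_iff.mpr fun X => ⟨diagonalUnits_conj_mem d, fun hX => ?_⟩
  have := diagonalUnits_conj_mem d⁻¹ hX
  rw [map_inv, inv_inv] at this
  simpa [mul_assoc] using this

end UT

section TwistedFixedPoint

variable {n : ℕ} {K : Type*} [Field K]

/-- Solves `x * (c ⊙ z) = z` entrywise by back substitution, each column from the diagonal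
upwards; entry `(i, j)` with `i < j` needs `c i j ≠ 1`. -/
noncomputable def twistedFixedPoint (x c : Matrix (Fin n) (Fin n) K) : Fin n → Fin n → K
  | i, j =>
    if _ : i < j then
      (1 - c i j)⁻¹ *
        ∑ k ∈ (Finset.Ioc i j).attach, x i k * (c k j * twistedFixedPoint x c k j)
    else if i = j then 1 else 0
  termination_by i _ => n - (i : ℕ)
  decreasing_by exact Nat.sub_lt_sub_left i.2 (Finset.mem_Ioc.mp k.2).1

variable (x c : Matrix (Fin n) (Fin n) K)

theorem twistedFixedPoint_self (i : Fin n) : twistedFixedPoint x c i i = 1 := by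
  rw [twistedFixedPoint]
  simp

theorem twistedFixedPoint_of_lt {i j : Fin n} (h : j < i) : twistedFixedPoint x c i j = 0 := by
  rw [twistedFixedPoint]
  simp [not_lt_of_gt h, h.ne']

theorem isUnitriangular_twistedFixedPoint : (of (twistedFixedPoint x c)).IsUnitriangular :=
  ⟨twistedFixedPoint_self x c, fun _ _ => twistedFixedPoint_of_lt x c⟩

variable {c}

theorem one_sub_mul_twistedFixedPoint (hc₁ : ∀ i, c i i = 1)
    (hc : ∀ ⦃i j : Fin n⦄, i < j → c i j ≠ 1) {i j : Fin n} (h : i ≤ j) :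
    (1 - c i j) * twistedFixedPoint x c i j =
      ∑ k ∈ Finset.Ioc i j, x i k * (c k j * twistedFixedPoint x c k j) := by
  rcases h.lt_or_eq with h | rfl
  · rw [twistedFixedPoint, dif_pos h, ← mul_assoc,
      mul_inv_cancel₀ (sub_ne_zero.mpr (hc h).symm), one_mul]
    exact Finset.sum_attach _ fun k => x i k * (c k j * twistedFixedPoint x c k j)
  · simp [hc₁]

theorem mul_hadamard_twistedFixedPoint (hx : x.IsUnitriangular) (hc₁ : ∀ i, c i i = 1)
    (hc : ∀ ⦃i j : Fin n⦄, i < j → c i j ≠ 1) :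
    x * (c ⊙ of (twistedFixedPoint x c)) = of (twistedFixedPoint x c) := by
  have hcz : (c ⊙ of (twistedFixedPoint x c)).BlockTriangular id := fun i j (hij : j < i) => by
    rw [hadamard_apply, of_apply, twistedFixedPoint_of_lt x c hij, mul_zero]
  ext i j
  rw [mul_apply_eq_sum_Icc hx.blockTriangular hcz]
  rcases le_or_gt i j with h | h
  · rw [Finset.Icc_eq_cons_Ioc h, Finset.sum_cons, hx.1 i]
    simp only [hadamard_apply, of_apply]
    rw [← one_sub_mul_twistedFixedPoint x hc₁ hc h]
    ring
  · rw [Finset.Icc_eq_empty_of_lt h, Finset.sum_empty, of_apply, twistedFixedPoint_of_lt x c h]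

end TwistedFixedPoint

section DiagonalAut

variable {n : ℕ}

noncomputable def diagonalAut {R : Type*} [CommRing R] (d : Fin n → Rˣ) : MulAut (UT n R) :=
  (UT n R).normalizerMonoidHom ⟨diagonalUnits R d, UT.diagonalUnits_mem_normalizer d⟩

theorem UTmat_diagonalAut {R : Type*} [CommRing R] (d : Fin n → Rˣ) (X : UT n R) :
    UTmat (diagonalAut d X) =
      diagonal (fun i => (d i : R)) * UTmat X * diagonal fun i => (((d i)⁻¹ : Rˣ) : R) :=
  rfl

theorem twistedConj_diagonalAut_one {K : Type*} [Field K] {d : Fin n → Kˣ}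
    (hd : Function.Injective d) (X : UT n K) : TwistedConj (diagonalAut d) X 1 := by
  set c : Matrix (Fin n) (Fin n) K := of fun i j => ((d i * (d j)⁻¹ : Kˣ) : K)
  have hc₁ : ∀ i, c i i = 1 := fun i => by simp [c]
  have hc : ∀ ⦃i j : Fin n⦄, i < j → c i j ≠ 1 := fun i j hij h => by
    simp only [c, of_apply, Units.val_eq_one, mul_inv_eq_one] at h
    exact hij.ne (hd h)
  obtain ⟨Z, hZ⟩ := UT.exists_UTmat_eq (isUnitriangular_twistedFixedPoint (UTmat X) c)
  refine ⟨Z, eq_mul_inv_of_mul_eq (UT.UTmat_injective ?_)⟩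
  rw [mul_one, UT.UTmat_mul, UTmat_diagonalAut, diagonal_mul_mul_diagonal_eq_hadamard, hZ]
  exact mul_hadamard_twistedFixedPoint _ X.2 hc₁ hc

end DiagonalAut

theorem exists_diagonal_aut_reidemeisterNumber_eq_one_general
    (R : Type) [Field R] [CharZero R] (n : ℕ) :
    ∃ (d : Fin n → Rˣ) (ψ : MulAut (UT n R)),
      (∀ X : UT n R, UTmat (ψ X) =
        Matrix.diagonal (fun i => (d i : R)) * UTmat X *
          Matrix.diagonal (fun i => (((d i)⁻¹ : Rˣ) : R))) ∧
      reidemeisterNumber (ψ : (UT n R) ≃* (UT n R)) = 1 := by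
  let d : Fin n → Rˣ := fun i => Units.mk0 ((i : ℕ) + 1 : R) (Nat.cast_add_one_ne_zero i)
  have hd : Function.Injective d := fun i j h =>
    Fin.ext (by simpa [d] using congrArg Units.val h)
  exact ⟨d, diagonalAut d, UTmat_diagonalAut d,
    reidemeisterNumber_eq_one_of_forall_twistedConj_one _ (twistedConj_diagonalAut_one hd)⟩

/-- Over a field of characteristic zero, for `n ≥ 2` there is a diagonal automorphism
`X ↦ D X D⁻¹` of `UT n R` with Reidemeister number `1`. -/
theorem exists_diagonal_aut_reidemeisterNumber_eq_one
    (R : Type) [Field R] [CharZero R] (n : ℕ) (hn : 2 ≤ n) :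
    ∃ (d : Fin n → Rˣ) (ψ : MulAut (UT n R)),
      (∀ X : UT n R, UTmat (ψ X) =
        Matrix.diagonal (fun i => (d i : R)) * UTmat X *
          Matrix.diagonal (fun i => (((d i)⁻¹ : Rˣ) : R))) ∧
      reidemeisterNumber (ψ : (UT n R) ≃* (UT n R)) = 1 :=
  exists_diagonal_aut_reidemeisterNumber_eq_one_general R n
end

section
/- Let G be a group, φ an automorphism of G, and H a central subgroup of G with φ(H) = H. Let φ′ denote the automorphism of H induced by φ, and φ̄ the automorphism of G/H induced by φ. Then R(φ) ≤ R(φ′) · R(φ̄), where the product is taken in ℕ ∪ {∞}. -/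
open Matrix

/-!
Send a pair of classes `([h], [ḡ])` to the `φ`-class of `g * h`, for chosen representatives
`h ∈ H` and `g ∈ G`. This map is onto: if `x̄` is `φ̄`-conjugate to `ḡ`, then `x = z g φ(z)⁻¹ h`
for some `z ∈ G` and `h ∈ H`, and since `h` is central this is `z (g h) φ(z)⁻¹`. Centrality of
`H` also makes the `φ`-class of `g * h` depend only on the `φ'`-class of `h`, so any
representative of `[h]` may be used.
-/

open Cardinal

universe u

section TwistedConj

variable {G : Type*} [Group G] (φ : G ≃* G)

theorem twistedConj_equivalence : Equivalence (TwistedConj φ) where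
  refl x := ⟨1, by simp⟩
  symm := by
    rintro x y ⟨z, rfl⟩
    exact ⟨z⁻¹, by simp [mul_assoc]⟩
  trans := by
    rintro x y u ⟨z, rfl⟩ ⟨w, rfl⟩
    exact ⟨z * w, by simp [mul_assoc]⟩

variable {φ}

theorem twistedConj_of_quot_mk_eq {x y : G}
    (h : Quot.mk (TwistedConj φ) x = Quot.mk (TwistedConj φ) y) : TwistedConj φ x y :=
  ((twistedConj_equivalence φ).quot_mk_eq_iff x y).mp h

theorem TwistedConj.mul_right_of_mem_center {x y c : G} (hc : c ∈ Subgroup.center G)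
    (hxy : TwistedConj φ x y) : TwistedConj φ (x * c) (y * c) := by
  obtain ⟨z, rfl⟩ := hxy
  refine ⟨z, ?_⟩
  rw [mul_assoc _ _ c, Subgroup.mem_center_iff.mp hc]
  simp only [mul_assoc]

end TwistedConj

section Central

variable {G : Type*} [Group G] {φ : G ≃* G} {H : Subgroup G}

theorem TwistedConj.mul_left_coe_of_le_center (hcent : H ≤ Subgroup.center G) {φ' : H ≃* H}
    (hφ' : ∀ h : H, ((φ' h : H) : G) = φ (h : G)) (g : G) {h₁ h₂ : H}
    (hh : TwistedConj φ' h₁ h₂) : TwistedConj φ (g * h₁) (g * h₂) := by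
  obtain ⟨w, rfl⟩ := hh
  refine ⟨w, ?_⟩
  simp only [Subgroup.coe_mul, Subgroup.coe_inv, hφ', ← mul_assoc]
  rw [Subgroup.mem_center_iff.mp (hcent w.2) g]

theorem exists_twistedConj_mul_of_twistedConj_quotient [H.Normal]
    (hcent : H ≤ Subgroup.center G) {φbar : (G ⧸ H) ≃* (G ⧸ H)}
    (hφbar : ∀ g : G, φbar ((g : G) : G ⧸ H) = ((φ g : G) : G ⧸ H)) {x g : G}
    (hxg : TwistedConj φbar (x : G ⧸ H) (g : G ⧸ H)) : ∃ h : H, TwistedConj φ x (g * h) := by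
  obtain ⟨zbar, hz⟩ := hxg
  obtain ⟨z, rfl⟩ := QuotientGroup.mk_surjective zbar
  rw [hφbar, ← QuotientGroup.mk_inv, ← QuotientGroup.mk_mul, ← QuotientGroup.mk_mul,
    eq_comm, QuotientGroup.eq] at hz
  refine ⟨⟨_, hz⟩, ?_⟩
  simpa only [mul_inv_cancel_left] using
    TwistedConj.mul_right_of_mem_center (hcent hz) (⟨z, rfl⟩ : TwistedConj φ (z * g * (φ z)⁻¹) g)

end Central

theorem Cardinal.toENat_mk_le_mul_of_surjective {α β γ : Type u} (f : α × β → γ)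
    (hf : Function.Surjective f) : toENat #γ ≤ toENat #α * toENat #β := by
  rw [← map_mul, mul_def]
  exact toENat.monotone' (mk_le_of_surjective hf)

theorem reidemeisterNumber_le_mul_of_central_general
    {G : Type*} [Group G] (φ : G ≃* G) (H : Subgroup G) [H.Normal]
    (hcent : H ≤ Subgroup.center G)
    (φ' : H ≃* H) (hφ' : ∀ h : H, ((φ' h : H) : G) = φ (h : G))
    (φbar : (G ⧸ H) ≃* (G ⧸ H))
    (hφbar : ∀ g : G, φbar ((g : G) : G ⧸ H) = ((φ g : G) : G ⧸ H)) :
    reidemeisterNumber φ ≤ reidemeisterNumber φ' * reidemeisterNumber φbar := by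
  let f : Quot (TwistedConj φ') × Quot (TwistedConj φbar) → Quot (TwistedConj φ) :=
    fun p => Quot.mk _ ((Quot.out p.2).out * ((Quot.out p.1 : H) : G))
  refine toENat_mk_le_mul_of_surjective f fun q => ?_
  induction q using Quot.ind with | mk x => ?_
  let b := Quot.mk (TwistedConj φbar) (x : G ⧸ H)
  have hxb : TwistedConj φbar (x : G ⧸ H) ((Quot.out b).out : G ⧸ H) := by
    rw [QuotientGroup.out_eq']
    exact twistedConj_of_quot_mk_eq (Quot.out_eq b).symm
  obtain ⟨h, hxh⟩ := exists_twistedConj_mul_of_twistedConj_quotient hcent hφbar hxb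
  have hout : TwistedConj φ' (Quot.out (Quot.mk (TwistedConj φ') h)) h :=
    twistedConj_of_quot_mk_eq (Quot.out_eq _)
  exact ⟨(Quot.mk _ h, b), Quot.sound <| (twistedConj_equivalence φ).trans
    (.mul_left_coe_of_le_center hcent hφ' _ hout) ((twistedConj_equivalence φ).symm hxh)⟩

/-- If `H` is a `φ`-invariant central subgroup of `G`, `φ'` the induced automorphism of `H`
and `φ̄` the induced automorphism of `G ⧸ H`, then `R(φ) ≤ R(φ') · R(φ̄)` in `ℕ ∪ {∞}`. -/
theorem reidemeisterNumber_le_mul_of_central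
    {G : Type*} [Group G] (φ : G ≃* G) (H : Subgroup G) [H.Normal]
    (hcent : H ≤ Subgroup.center G) (hinv : ∀ x : G, x ∈ H ↔ φ x ∈ H)
    (φ' : H ≃* H) (hφ' : ∀ h : H, ((φ' h : H) : G) = φ (h : G))
    (φbar : (G ⧸ H) ≃* (G ⧸ H))
    (hφbar : ∀ g : G, φbar ((g : G) : G ⧸ H) = ((φ g : G) : G ⧸ H)) :
    reidemeisterNumber φ ≤ reidemeisterNumber φ' * reidemeisterNumber φbar :=
  reidemeisterNumber_le_mul_of_central_general φ H hcent φ' hφ' φbar hφbar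
end

section
/- Let G = ⟨x | x⁴ = 1⟩ be a cyclic group of order 4, let H = ⟨x²⟩ be its order-2 subgroup, and let φ : x ↦ x⁻¹ be the inversion automorphism of G. Then H is a central φ-invariant subgroup, and for the induced automorphisms φ′ of H and φ̄ of G/H one has R(φ) = 2, R(φ′) = 2, R(φ̄) = 2; in particular R(φ) ≠ R(φ′) · R(φ̄). -/
open Matrix

/-- The cyclic group of order 4 (written multiplicatively). -/
abbrev C4 : Type := Multiplicative (ZMod 4)

/-- A generator `x` of the cyclic group of order 4. -/
def c4gen : C4 := Multiplicative.ofAdd (1 : ZMod 4)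

/-- The subgroup `H = ⟨x²⟩` of order 2. -/
def H4 : Subgroup C4 := Subgroup.zpowers (c4gen ^ 2)

/-- The inversion automorphism `x ↦ x⁻¹` of the cyclic group of order 4. -/
def inv4 : C4 ≃* C4 := MulEquiv.inv C4

/- ### Auxiliary lemmas -/

lemma reid_eq_enat {G : Type*} [Group G] (φ : G ≃* G) :
    reidemeisterNumber φ = ENat.card (Quot (TwistedConj φ)) := rfl

lemma enat_card_of_natcard {α : Type*} [Finite α] {n : ℕ} (h : Nat.card α = n) :
    ENat.card α = n := by
  letI := Fintype.ofFinite α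
  rw [ENat.card_eq_coe_fintype_card, Fintype.card_eq_nat_card, h]

/-- If a relation implies equality, its `Quot` is equivalent to the base type. -/
def quotEquivOfEqRel {α : Type*} (r : α → α → Prop) (h : ∀ x y, r x y → x = y) :
    Quot r ≃ α where
  toFun := Quot.lift id h
  invFun := Quot.mk r
  left_inv := by intro q; induction q using Quot.ind; rfl
  right_inv := fun _ => rfl

def f4 : C4 → ZMod 2 := fun g => ZMod.castHom (by norm_num : (2:ℕ) ∣ 4) (ZMod 2) g.toAdd

lemma f4_sound : ∀ x y : C4, TwistedConj inv4 x y → f4 x = f4 y := by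
  rintro x y ⟨z, rfl⟩
  revert y z; decide

lemma f4_complete : ∀ x y : C4, f4 x = f4 y → TwistedConj inv4 x y := by
  unfold TwistedConj; decide

lemma f4_surj : ∀ b : ZMod 2, ∃ g : C4, f4 g = b := by decide

noncomputable def e1 : Quot (TwistedConj inv4) ≃ ZMod 2 :=
  Equiv.ofBijective (Quot.lift f4 f4_sound) (by
    constructor
    · intro a b
      induction a using Quot.ind with | _ x =>
      induction b using Quot.ind with | _ y =>
      intro h
      exact Quot.sound (f4_complete x y h)
    · intro b
      obtain ⟨g, hg⟩ := f4_surj b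
      exact ⟨Quot.mk _ g, hg⟩)

lemma reid_inv4 : reidemeisterNumber inv4 = 2 := by
  rw [reid_eq_enat, ENat.card_congr e1, ENat.card_eq_coe_fintype_card]
  simp

lemma H4_sq (h : C4) (hh : h ∈ H4) : h * h = 1 := by
  obtain ⟨k, rfl⟩ := hh
  show (c4gen ^ 2) ^ k * (c4gen ^ 2) ^ k = 1
  have h2 : (c4gen ^ 2) ^ (2:ℤ) = 1 := by decide
  rw [← _root_.zpow_add, ← two_mul, _root_.zpow_mul, h2, _root_.one_zpow]

lemma card_H4 : Nat.card H4 = 2 := by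
  rw [H4, Nat.card_zpowers]
  refine orderOf_eq_prime ?_ ?_ <;> decide

lemma card_Q4 : Nat.card (C4 ⧸ H4) = 2 := by
  have h := Subgroup.card_eq_card_quotient_mul_card_subgroup H4
  rw [card_H4] at h
  have : Nat.card C4 = 4 := by simp [Nat.card_eq_fintype_card]
  omega

lemma sq_mem_H4 : ∀ g : C4, g * g ∈ H4 := by
  have key : ∀ g : C4, ∃ k : Fin 4, (c4gen ^ 2) ^ (k : ℕ) = g * g := by decide
  intro g
  obtain ⟨k, hk⟩ := key g
  rw [H4, Subgroup.mem_zpowers_iff]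
  exact ⟨(k : ℕ), by rw [zpow_natCast]; exact hk⟩

/-- For `G = ⟨x | x⁴ = 1⟩`, `H = ⟨x²⟩` and `φ : x ↦ x⁻¹`: `H` is a central `φ`-invariant
subgroup, `R(φ) = R(φ') = R(φ̄) = 2` for the induced automorphisms, and in particular
`R(φ) ≠ R(φ') · R(φ̄)`. -/
theorem cyclic4_reidemeister_counterexample :
    H4 ≤ Subgroup.center C4 ∧ (∀ h : C4, h ∈ H4 → inv4 h ∈ H4) ∧
    reidemeisterNumber inv4 = 2 ∧
    ∀ (φ' : H4 ≃* H4) (φbar : (C4 ⧸ H4) ≃* (C4 ⧸ H4)),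
      (∀ h : H4, ((φ' h : H4) : C4) = inv4 (h : C4)) →
      (∀ g : C4, φbar ((g : C4) : C4 ⧸ H4) = ((inv4 g : C4) : C4 ⧸ H4)) →
      reidemeisterNumber φ' = 2 ∧ reidemeisterNumber φbar = 2 ∧
        reidemeisterNumber inv4 ≠ reidemeisterNumber φ' * reidemeisterNumber φbar := by
  refine ⟨?_, ?_, reid_inv4, ?_⟩
  · rw [CommGroup.center_eq_top]; exact le_top
  · intro h hh
    exact H4.inv_mem hh
  · intro φ' φbar h1 h2
    -- φ' is the identity
    have hφ' : ∀ h : H4, φ' h = h := by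
      intro h
      apply Subtype.ext
      rw [h1 h]
      show ((h : C4))⁻¹ = (h : C4)
      exact inv_eq_of_mul_eq_one_left (H4_sq (h : C4) h.2)
    -- φbar is the identity
    have hφbar : ∀ q : C4 ⧸ H4, φbar q = q := by
      intro q
      induction q using QuotientGroup.induction_on with | _ g =>
      rw [h2 g]
      show ((g⁻¹ : C4) : C4 ⧸ H4) = ((g : C4) : C4 ⧸ H4)
      rw [QuotientGroup.eq]
      simpa using sq_mem_H4 g
    have key1 : ∀ x y : H4, TwistedConj φ' x y → x = y := by
      rintro x y ⟨z, rfl⟩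
      rw [hφ' z, mul_comm z y, mul_inv_cancel_right]
    have key2 : ∀ x y : C4 ⧸ H4, TwistedConj φbar x y → x = y := by
      rintro x y ⟨z, rfl⟩
      rw [hφbar z, mul_comm z y, mul_inv_cancel_right]
    have hc1 : reidemeisterNumber φ' = 2 := by
      rw [reid_eq_enat, ENat.card_congr (quotEquivOfEqRel _ key1)]
      exact enat_card_of_natcard card_H4
    have hc2 : reidemeisterNumber φbar = 2 := by
      rw [reid_eq_enat, ENat.card_congr (quotEquivOfEqRel _ key2)]
      exact enat_card_of_natcard card_Q4
    refine ⟨hc1, hc2, ?_⟩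
    rw [reid_inv4, hc1, hc2]
    decide
end

section
/- Let φ be an automorphism of a free abelian group G of finite rank. Then R(φ) is infinite if and only if φ has a non-trivial fixed point, i.e. there exists x ∈ G with x ≠ 0 and φ(x) = x. -/
open Matrix

/-- `x` and `y` are twisted conjugate with respect to the additive automorphism `φ`,
i.e. `x = z + y - φ z` for some `z`. -/
def AddTwistedConj {G : Type*} [AddGroup G] (φ : G ≃+ G) (x y : G) : Prop :=
  ∃ z : G, x = z + y - φ z

/-- The Reidemeister number of an automorphism of an additive group: the number of twisted
conjugacy classes, as an element of `ℕ∞ = ℕ ∪ {∞}`. -/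
noncomputable def addReidemeisterNumber {G : Type*} [AddGroup G] (φ : G ≃+ G) : ℕ∞ :=
  Cardinal.toENat (Cardinal.mk (Quot (AddTwistedConj φ)))

/-- An automorphism of a free abelian group of finite rank has infinite Reidemeister
number if and only if it has a non-trivial fixed point. -/
theorem addReidemeisterNumber_eq_top_iff_fixed_point
    (r : ℕ) (φ : (Fin r → ℤ) ≃+ (Fin r → ℤ)) :
    addReidemeisterNumber φ = ⊤ ↔ ∃ x : Fin r → ℤ, x ≠ 0 ∧ φ x = x := by
  classical
  set f : (Fin r → ℤ) →ₗ[ℤ] (Fin r → ℤ) :=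
    LinearMap.id - φ.toAddMonoidHom.toIntLinearMap with hf
  set N : Submodule ℤ (Fin r → ℤ) := LinearMap.range f with hN
  -- relation identification
  have hrel : ∀ x y, AddTwistedConj φ x y ↔ N.quotientRel x y := by
    intro x y
    rw [Submodule.quotientRel_def]
    constructor
    · rintro ⟨z, rfl⟩
      exact ⟨z, by simp [hf, sub_eq_iff_eq_add]; abel⟩
    · rintro ⟨z, hz⟩
      refine ⟨z, ?_⟩
      simp only [hf, LinearMap.sub_apply, LinearMap.id_apply,
        AddMonoidHom.coe_toIntLinearMap, AddEquiv.coe_toAddMonoidHom] at hz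
      linear_combination -hz
  have e : Quot (AddTwistedConj φ) ≃ ((Fin r → ℤ) ⧸ N) :=
    Quot.congr (Equiv.refl _) (by intro a b; exact hrel a b)
  have hcard : addReidemeisterNumber φ = ⊤ ↔ Infinite ((Fin r → ℤ) ⧸ N) := by
    rw [addReidemeisterNumber, Cardinal.mk_congr e, Cardinal.toENat_eq_top,
      Cardinal.infinite_iff]
  rw [hcard]
  have hinj : Function.Injective f ↔ ¬ ∃ x : Fin r → ℤ, x ≠ 0 ∧ φ x = x := by
    rw [← LinearMap.ker_eq_bot, Submodule.eq_bot_iff]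
    constructor
    · rintro h ⟨x, hx0, hx⟩
      exact hx0 (h x (by simp [hf, LinearMap.mem_ker, hx]))
    · intro h x hx
      by_contra hx0
      refine h ⟨x, hx0, ?_⟩
      simp only [hf, LinearMap.mem_ker, LinearMap.sub_apply, LinearMap.id_apply,
        AddMonoidHom.coe_toIntLinearMap, AddEquiv.coe_toAddMonoidHom] at hx
      exact (sub_eq_zero.mp hx).symm
  have h2 : Nonempty (N ≃ₗ[ℤ] (Fin r → ℤ)) ↔ Function.Injective f := by
    constructor
    · rintro ⟨e⟩
      intro x y hxy
      have hs : Function.Surjective (e.toLinearMap ∘ₗ f.rangeRestrict) :=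
        e.surjective.comp f.surjective_rangeRestrict
      have hi := OrzechProperty.injective_of_surjective_endomorphism _ hs
      exact hi (by simp [LinearMap.comp_apply, LinearMap.rangeRestrict,
        Subtype.ext_iff, LinearMap.codRestrict_apply, hxy])
    · intro h
      exact ⟨(LinearEquiv.ofInjective f h).symm⟩
  have h3 : N.toAddSubgroup.index ≠ 0 ↔ ¬ Infinite ((Fin r → ℤ) ⧸ N) := by
    rw [AddSubgroup.index_eq_card, not_infinite_iff_finite]
    rw [Nat.card_ne_zero]
    have e2 : ((Fin r → ℤ) ⧸ N.toAddSubgroup) ≃ ((Fin r → ℤ) ⧸ N) := Equiv.refl _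
    constructor
    · rintro ⟨-, hfin⟩; exact Finite.of_equiv _ e2
    · intro hfin; exact ⟨⟨Submodule.Quotient.mk 0⟩, Finite.of_equiv _ e2.symm⟩
  rw [← not_iff_comm.mp (h3.symm.trans (Int.submodule_toAddSubgroup_index_ne_zero_iff.trans (h2.trans hinj)))]

  exact not_not
end

section
/- Let R be an infinite integral domain whose additive group R⁺ is a finitely generated abelian group, let a ∈ R* be a unit with a ≠ 1, and let φ : R⁺ → R⁺ be the automorphism x ↦ a·x. Then the Reidemeister number R(φ) is finite. -/
/-! Twisted conjugacy for `x ↦ a * x` is congruence modulo the ideal `(1 - a)`, because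
`z + y - a * z = y + (1 - a) * z`. So the Reidemeister classes are the elements of `R ⧸ (1 - a)`,
and this quotient is finite: `a ≠ 1` makes the ideal nonzero, and a domain that is finitely
generated as an abelian group has finite quotients by its nonzero ideals. -/

open Matrix

theorem addReidemeisterNumber_ne_top_iff_finite {G : Type*} [AddGroup G] (φ : G ≃+ G) :
    addReidemeisterNumber φ ≠ ⊤ ↔ Finite (Quot (AddTwistedConj φ)) := by
  rw [addReidemeisterNumber, Ne, Cardinal.toENat_eq_top, not_le, Cardinal.lt_aleph0_iff_finite]

section AddCommGroup

variable {G : Type*} [AddCommGroup G] (φ : G ≃+ G)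

theorem addTwistedConj_iff_sub_mem_range (x y : G) :
    AddTwistedConj φ x y ↔ x - y ∈ (AddMonoidHom.id G - φ.toAddMonoidHom).range := by
  simp only [AddTwistedConj, AddMonoidHom.mem_range, AddMonoidHom.sub_apply,
    AddMonoidHom.id_apply, AddEquiv.coe_toAddMonoidHom]
  refine exists_congr fun z => ⟨fun h => ?_, fun h => ?_⟩
  · rw [h]
    abel
  · rw [← sub_add_cancel x y, ← h]
    abel

def addTwistedConjQuotEquiv :
    Quot (AddTwistedConj φ) ≃ G ⧸ (AddMonoidHom.id G - φ.toAddMonoidHom).range :=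
  Quot.congrRight fun x y => by
    rw [addTwistedConj_iff_sub_mem_range, QuotientAddGroup.leftRel_apply, neg_add_eq_sub,
      sub_mem_comm_iff]

end AddCommGroup

theorem range_id_sub_mulLeft_eq_span {R : Type*} [CommRing R] (c : R) (φ : R ≃+ R)
    (hφ : ∀ x, φ x = c * x) :
    (AddMonoidHom.id R - φ.toAddMonoidHom).range = (Ideal.span {1 - c}).toAddSubgroup := by
  ext x
  simp only [AddMonoidHom.mem_range, AddMonoidHom.sub_apply, AddMonoidHom.id_apply,
    AddEquiv.coe_toAddMonoidHom, hφ, Submodule.mem_toAddSubgroup, Ideal.mem_span_singleton']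
  exact exists_congr fun z => by rw [mul_sub, mul_one, mul_comm]

theorem addReidemeisterNumber_mul_unit_ne_top_general
    (R : Type) [CommRing R] [IsDomain R] [AddGroup.FG R]
    (a : Rˣ) (ha : (a : R) ≠ 1) (φ : R ≃+ R) (hφ : ∀ x : R, φ x = (a : R) * x) :
    addReidemeisterNumber φ ≠ ⊤ := by
  have : Module.Finite ℤ R := Module.Finite.iff_addGroup_fg.mpr ‹_›
  have hI : Ideal.span {1 - (a : R)} ≠ ⊥ := by
    rw [Ne, Ideal.span_singleton_eq_bot, sub_eq_zero]
    exact ha.symm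
  have : Finite (R ⧸ Ideal.span {1 - (a : R)}) := Ring.HasFiniteQuotients.finiteQuotient hI
  rw [addReidemeisterNumber_ne_top_iff_finite, (addTwistedConjQuotEquiv φ).finite_iff,
    range_id_sub_mulLeft_eq_span _ φ hφ]
  exact this

/-- Let `R` be an infinite integral domain whose additive group is finitely generated, and
let `a ≠ 1` be a unit of `R`. Then the automorphism `x ↦ a * x` of the additive group of `R`
has finite Reidemeister number. -/
theorem addReidemeisterNumber_mul_unit_ne_top
    (R : Type) [CommRing R] [IsDomain R] [Infinite R] [AddGroup.FG R]
    (a : Rˣ) (ha : (a : R) ≠ 1) (φ : R ≃+ R) (hφ : ∀ x : R, φ x = (a : R) * x) :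
    addReidemeisterNumber φ ≠ ⊤ :=
  addReidemeisterNumber_mul_unit_ne_top_general R a ha φ hφ
end

section
/- Let R be an integral domain of characteristic zero whose additive group R⁺ is a finitely generated abelian group of rank N. Then every ring automorphism δ of R has finite order; more precisely, δ^{(N+1)!} is the identity automorphism of R. -/
open Matrix Module

/-- Let `R` be an integral domain of characteristic zero whose additive group is a finitely
generated abelian group of rank `N`. Then every ring automorphism `δ` of `R` has finite
order; more precisely `δ ^ (N + 1)! = 1`. -/
theorem ringAut_pow_factorial_eq_one
    (R : Type) [CommRing R] [IsDomain R] [CharZero R] [Module.Finite ℤ R]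
    (N : ℕ) (hN : Module.finrank ℤ R = N) (δ : R ≃+* R) :
    IsOfFinOrder δ ∧ δ ^ (N + 1).factorial = 1 := by
  suffices h : δ ^ (N + 1).factorial = 1 from
    ⟨isOfFinOrder_iff_pow_eq_one.mpr ⟨(N+1).factorial, Nat.factorial_pos _, h⟩, h⟩
  set K := FractionRing R
  letI : Algebra ℚ K := inferInstance
  -- a basis of R over ℤ
  let b := Module.Free.chooseBasis ℤ R
  set s : Set K := (algebraMap R K) '' (Set.range b) with hs
  have hsfin : s.Finite := (Set.finite_range b).image _
  set V : Submodule ℚ K := Submodule.span ℚ s with hV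
  haveI hVfd : FiniteDimensional ℚ V := FiniteDimensional.span_of_finite ℚ hsfin
  -- image of R lies in V
  have himage : ∀ x : R, algebraMap R K x ∈ V := by
    intro x
    have hx : x ∈ Submodule.span ℤ (Set.range ⇑b) := by rw [b.span_eq]; trivial
    refine Submodule.span_induction ?_ ?_ ?_ ?_ hx
    · rintro y ⟨i, rfl⟩
      exact Submodule.subset_span ⟨b i, ⟨i, rfl⟩, rfl⟩
    · simp only [map_zero]; exact V.zero_mem
    · intro y z _ _ hy hz
      rw [map_add]; exact V.add_mem hy hz
    · intro z y _ hy
      rw [map_zsmul]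
      have : (z : ℤ) • algebraMap R K y = (z : ℚ) • algebraMap R K y := by
        rw [← Int.cast_smul_eq_zsmul ℚ]
      rw [this]
      exact V.smul_mem _ hy
  -- V is closed under multiplication
  have hmul : ∀ x ∈ V, ∀ y ∈ V, x * y ∈ V := by
    have hVV : V * V ≤ V := by
      rw [hV, Submodule.span_mul_span]
      refine Submodule.span_le.mpr ?_
      rintro _ ⟨u, hu, v, hv, rfl⟩
      obtain ⟨r1, ⟨i, rfl⟩, rfl⟩ := hu
      obtain ⟨r2, ⟨j, rfl⟩, rfl⟩ := hv
      show algebraMap R K (b i) * algebraMap R K (b j) ∈ V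
      rw [← _root_.map_mul]
      exact himage (b i * b j)
    exact fun x hx y hy => hVV (Submodule.mul_mem_mul hx hy)
  -- V = ⊤
  have htop : V = ⊤ := by
    rw [eq_top_iff]
    rintro y -
    obtain ⟨a, t, ht, rfl⟩ := IsFractionRing.div_surjective (A := R) y
    have htV : algebraMap R K t ∈ V := himage t
    have htne : algebraMap R K t ≠ 0 :=
      IsFractionRing.to_map_ne_zero_of_mem_nonZeroDivisors ht
    let m : V →ₗ[ℚ] V :=
      { toFun := fun v => ⟨algebraMap R K t * (v : K), hmul _ htV _ v.2⟩
        map_add' := fun v w => by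
          ext; simp [mul_add]
        map_smul' := fun c v => by
          ext; simp [mul_smul_comm] }
    have hinjm : Function.Injective m := by
      intro v w h
      have h' : algebraMap R K t * (v : K) = algebraMap R K t * (w : K) :=
        congrArg Subtype.val h
      exact Subtype.ext (mul_left_cancel₀ htne h')
    have hsurj := LinearMap.injective_iff_surjective.mp hinjm
    have h1V : (1 : K) ∈ V := by
      have := himage 1
      rwa [_root_.map_one] at this
    obtain ⟨w, hw⟩ := hsurj ⟨1, h1V⟩
    have hw' : algebraMap R K t * (w : K) = 1 := congrArg Subtype.val hw
    have hinv : (algebraMap R K t)⁻¹ = (w : K) := inv_eq_of_mul_eq_one_right hw'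
    rw [div_eq_mul_inv, hinv]
    exact hmul _ (himage a) _ w.2
  haveI : FiniteDimensional ℚ K := by
    rw [htop] at hVfd
    exact Module.Finite.equiv (Submodule.topEquiv)
  have hrank : finrank ℚ K ≤ N := by
    have h1 : finrank ℚ K = finrank ℚ V := by
      rw [htop, finrank_top]
    have h2 : s = Set.range (fun i => algebraMap R K (b i)) := by
      rw [hs, ← Set.range_comp]; rfl
    have h3 : finrank ℚ V ≤ Fintype.card (Module.Free.ChooseBasisIndex ℤ R) := by
      rw [hV, h2]
      exact finrank_range_le_card _
    have h4 : Fintype.card (Module.Free.ChooseBasisIndex ℤ R) = N := by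
      rw [← hN, Module.finrank_eq_card_chooseBasisIndex]
    omega

  -- lift δ to K
  let Δ : K ≃+* K := IsFractionRing.ringEquivOfRingEquiv δ
  let ΔA : K ≃ₐ[ℚ] K := AlgEquiv.ofRingEquiv (f := Δ) (fun q => by
    rw [show (algebraMap ℚ K) q = ((q : ℚ) : K) from (eq_ratCast (algebraMap ℚ K) q)]
    exact map_ratCast Δ.toRingHom q)
  -- the automorphism group is finite of card ≤ finrank
  haveI : Fintype (K ≃ₐ[ℚ] K) := AlgEquiv.fintype ℚ K
  have hcard : Fintype.card (K ≃ₐ[ℚ] K) ≤ N := by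
    let L := AlgebraicClosure K
    have hinj2 : Function.Injective
        (fun e : K ≃ₐ[ℚ] K => (IsScalarTower.toAlgHom ℚ K L).comp e.toAlgHom) := by
      intro e1 e2 h
      ext x
      have := congrArg (fun f : K →ₐ[ℚ] L => f x) h
      simpa using (algebraMap K L).injective (by simpa using this)
    calc Fintype.card (K ≃ₐ[ℚ] K) ≤ Fintype.card (K →ₐ[ℚ] L) :=
          Fintype.card_le_of_injective _ hinj2
      _ = finrank ℚ K := AlgHom.card ℚ K L
      _ ≤ N := hrank
  have horder : orderOf ΔA ∣ (N + 1).factorial := by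
    refine Nat.dvd_factorial (orderOf_pos ΔA) ?_
    calc orderOf ΔA ≤ Fintype.card (K ≃ₐ[ℚ] K) := orderOf_le_card_univ
      _ ≤ N := hcard
      _ ≤ N + 1 := Nat.le_succ N
  have hΔpow : ΔA ^ (N + 1).factorial = 1 := orderOf_dvd_iff_pow_eq_one.mp horder
  -- transfer back
  have hcomm : ∀ (m : ℕ) (x : R), (ΔA ^ m) (algebraMap R K x) = algebraMap R K ((δ ^ m) x) := by
    intro m
    induction m with
    | zero => intro x; simp
    | succ n ih =>
      intro x
      rw [pow_succ', pow_succ']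
      show ΔA ((ΔA ^ n) (algebraMap R K x)) = algebraMap R K (δ ((δ ^ n) x))
      rw [ih x]
      exact IsFractionRing.ringEquivOfRingEquiv_algebraMap δ ((δ ^ n) x)
  ext x
  have h1 := hcomm (N + 1).factorial x
  rw [hΔpow] at h1
  simp only [AlgEquiv.one_apply] at h1
  have h2 := IsFractionRing.injective R K h1
  exact h2.symm
end
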